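/- Let an EMM satisfy the KVXG rules with parameters (m̄, K, l₀, F_s), F_load > 0, step size d_s > 0, and define s_max = max((m̄·F_s - F_load)/K + d_s, F_load/K) + 2l₀. Then for any S ≥ s_max, the set of configurations with spread at most S is closed under all allowed transitions: if s(Z) ≤ S and λ(Z', Z) > 0 then s(Z') ≤ S. -/
import Mathlib

noncomputable def chi (K l₀ : ℝ) (l : ℝ) : ℝ :=
  if l > l₀ then K * (l - l₀) else if l < -l₀ then K * (l + l₀) else 0

lemma chi_lower {K l₀ : ℝ} (hK : 0 < K) (hl : 0 < l₀) (l : ℝ) :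
    K * (l - l₀) ≤ chi K l₀ l := by
  unfold chi; split_ifs with h1 h2 <;> nlinarith

lemma chi_upper {K l₀ : ℝ} (hK : 0 < K) (hl : 0 < l₀) (l : ℝ) :
    chi K l₀ l ≤ K * (l + l₀) := by
  unfold chi; split_ifs with h1 h2 <;> nlinarith

lemma chi_mono {K l₀ : ℝ} (hK : 0 < K) (hl : 0 < l₀) {x y : ℝ} (hxy : x ≤ y) :
    chi K l₀ x ≤ chi K l₀ y := by
  unfold chi; split_ifs <;> nlinarith

lemma chi_nonneg {K l₀ : ℝ} (hK : 0 < K) (hl : 0 < l₀) {l : ℝ} (h : -l₀ ≤ l) :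
    0 ≤ chi K l₀ l := by
  unfold chi; split_ifs <;> nlinarith

lemma chi_nonpos {K l₀ : ℝ} (hK : 0 < K) (hl : 0 < l₀) {l : ℝ} (h : l ≤ l₀) :
    chi K l₀ l ≤ 0 := by
  unfold chi; split_ifs <;> nlinarith

lemma sum_bound_above (s : Finset ℤ) (n : ℤ → ℕ) (g : ℤ → ℝ) (C : ℝ)
    {j : ℤ} (hj : j ∈ s) (hnj : 1 ≤ n j) (hg : ∀ i ∈ s, g i ≤ C) :
    ∑ i ∈ s, (n i : ℝ) * g i ≤ g j + ((∑ i ∈ s, (n i : ℝ)) - 1) * C := by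
  rw [← Finset.add_sum_erase _ _ hj, ← Finset.add_sum_erase _ (fun i => (n i : ℝ)) hj]
  have h2 := hg j hj
  have h3 : (1 : ℝ) ≤ (n j : ℝ) := by exact_mod_cast hnj
  have h1 : (n j : ℝ) * g j ≤ g j + ((n j : ℝ) - 1) * C := by nlinarith
  have h4 : ∑ i ∈ s.erase j, (n i : ℝ) * g i ≤ (∑ i ∈ s.erase j, (n i : ℝ)) * C := by
    rw [Finset.sum_mul]
    exact Finset.sum_le_sum fun i hi =>
      mul_le_mul_of_nonneg_left (hg i (Finset.mem_of_mem_erase hi)) (Nat.cast_nonneg _)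
  nlinarith

set_option maxHeartbeats 1000000 in
/-- For an EMM satisfying the KVXG rules, the set of configurations with spread at
most `S ≥ s_max` is closed under all allowed transitions (step, detachment,
attachment). Spread `≤ S` is expressed by bounding the distance between every pair
of occupied sites. -/
theorem spread_closed_under_transitions (K l₀ Fs F ds x₀ : ℝ) (mbar : ℕ)
    (hK : 0 < K) (hl : 0 < l₀) (hFs : 0 < Fs) (hF : 0 < F) (hd : 0 < ds)
    (S : ℝ) (hS : max ((mbar * Fs - F) / K + ds) (F / K) + 2 * l₀ ≤ S)
    (Z Z' : ℤ →₀ ℕ) (c : ℝ)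
    (hm1 : 1 ≤ Z.sum fun _ n => n) (hm2 : (Z.sum fun _ n => n) ≤ mbar)
    (hM : (Z'.sum fun _ n => n) ≤ mbar)
    (heq : F = Z.sum fun k n => (n : ℝ) * chi K l₀ (x₀ + k * ds - c))
    (hspread : ∀ j ∈ Z.support, ∀ k ∈ Z.support, ds * |(j : ℝ) - (k : ℝ)| ≤ S)
    (htrans :
      (∃ k : ℤ, 1 ≤ Z k ∧ chi K l₀ (x₀ + k * ds - c) < Fs ∧
        Z' = Z - Finsupp.single k 1 + Finsupp.single (k + 1) 1) ∨
      (∃ k : ℤ, 1 ≤ Z k ∧ Z' = Z - Finsupp.single k 1) ∨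
      (∃ k : ℤ, |x₀ + k * ds - c| ≤ l₀ ∧ Z' = Z + Finsupp.single k 1)) :
    ∀ j ∈ Z'.support, ∀ k ∈ Z'.support, ds * |(j : ℝ) - (k : ℝ)| ≤ S := by
  intro j hj k hk
  have hmax1 : (mbar * Fs - F) / K + ds + 2 * l₀ ≤ S := by
    have h := le_max_left ((mbar * Fs - F) / K + ds) (F / K); linarith
  have hmax2 : F / K + 2 * l₀ ≤ S := by
    have h := le_max_right ((mbar * Fs - F) / K + ds) (F / K); linarith
  have hFK : 0 < F / K := div_pos hF hK
  have hS0 : 0 < S := by linarith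
  have hsp : ∀ p ∈ Z.support, ∀ q ∈ Z.support, ((p : ℝ) - q) * ds ≤ S := by
    intro p hp q hq
    have h1 : ((p : ℝ) - q) * ds ≤ |(p : ℝ) - q| * ds :=
      mul_le_mul_of_nonneg_right (le_abs_self _) hd.le
    have h2 := hspread p hp q hq
    rw [mul_comm] at h2
    linarith
  rcases htrans with ⟨k₀, hk₀, hstall, hZ'⟩ | ⟨k₀, hk₀, hZ'⟩ | ⟨k₀, hk₀, hZ'⟩
  · -- step
    have hk₀mem : k₀ ∈ Z.support := Finsupp.mem_support_iff.mpr (by omega)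
    have hsub : ∀ i, i ∈ Z'.support → i ∈ Z.support ∨ i = k₀ + 1 := by
      intro i hi
      by_cases h : i = k₀ + 1
      · exact Or.inr h
      · left
        rw [Finsupp.mem_support_iff] at hi ⊢
        intro h0
        apply hi
        have hne : ¬ (k₀ + 1 = i) := fun he => h he.symm
        rw [hZ', Finsupp.add_apply, Finsupp.tsub_apply, h0]
        simp [Finsupp.single_apply, hne]
    have key : ∀ i ∈ Z.support, ds * |((k₀ + 1 : ℤ) : ℝ) - (i : ℝ)| ≤ S := by
      intro i hi
      push_cast
      rcases le_or_gt (k₀ + 1) i with hge | hlt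
      · have hge' : (k₀ : ℝ) + 1 ≤ i := by exact_mod_cast hge
        have h2 := hspread i hi k₀ hk₀mem
        have h3 : |((k₀ : ℝ) + 1) - i| ≤ |(i : ℝ) - k₀| := by
          rw [abs_sub_comm, abs_of_nonneg (by linarith), abs_of_nonneg (by linarith)]
          linarith
        calc ds * |((k₀ : ℝ) + 1) - i| ≤ ds * |(i : ℝ) - k₀| :=
              mul_le_mul_of_nonneg_left h3 hd.le
          _ ≤ S := h2
      · have hile : i ≤ k₀ := by omega
        have hile' : (i : ℝ) ≤ k₀ := by exact_mod_cast hile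
        rw [abs_of_nonneg (by linarith : (0:ℝ) ≤ (k₀ : ℝ) + 1 - i)]
        by_cases hex2 : ∃ p ∈ Z.support, k₀ < p
        · obtain ⟨p, hp, hpk⟩ := hex2
          have hp' : (k₀ : ℝ) + 1 ≤ p := by exact_mod_cast hpk
          have h5 := hsp p hp i hi
          nlinarith
        · push_neg at hex2
          have hall : ∀ p ∈ Z.support, chi K l₀ (x₀ + p * ds - c) ≤ Fs := by
            intro p hp
            have h1 : (p : ℝ) ≤ k₀ := by exact_mod_cast hex2 p hp
            have h2 : x₀ + p * ds - c ≤ x₀ + k₀ * ds - c := by nlinarith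
            exact le_trans (chi_mono hK hl h2) hstall.le
          have hiZ : 1 ≤ Z i := Nat.one_le_iff_ne_zero.mpr (Finsupp.mem_support_iff.mp hi)
          have hFle : F ≤ chi K l₀ (x₀ + i * ds - c)
              + ((∑ p ∈ Z.support, (Z p : ℝ)) - 1) * Fs := by
            rw [heq, Finsupp.sum]
            exact sum_bound_above Z.support Z _ Fs hi hiZ hall
          have hmsum : (∑ p ∈ Z.support, (Z p : ℝ)) ≤ (mbar : ℝ) := by
            rw [← Nat.cast_sum]
            exact_mod_cast (by rwa [Finsupp.sum] at hm2)
          have hFle2 : F ≤ chi K l₀ (x₀ + i * ds - c) + ((mbar : ℝ) - 1) * Fs := by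
            nlinarith
          have hup := chi_upper hK hl (x₀ + i * ds - c)
          have hlow := chi_lower hK hl (x₀ + k₀ * ds - c)
          have hdiv : K * (((mbar : ℝ) * Fs - F) / K) = (mbar : ℝ) * Fs - F := by
            field_simp
          have h2 : K * ((x₀ + k₀ * ds - c) - (x₀ + i * ds - c) - 2 * l₀)
              < K * (((mbar : ℝ) * Fs - F) / K) := by
            rw [hdiv]; nlinarith
          have h3 := lt_of_mul_lt_mul_left h2 hK.le
          nlinarith
    rcases hsub j hj with hj' | rfl <;> rcases hsub k hk with hk' | rfl
    · exact hspread j hj' k hk'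
    · rw [abs_sub_comm]; exact key j hj'
    · exact key k hk'
    · simpa using hS0.le
  · -- detach
    have hsub : ∀ i, i ∈ Z'.support → i ∈ Z.support := by
      intro i hi
      rw [Finsupp.mem_support_iff] at hi ⊢
      intro h0
      apply hi
      rw [hZ', Finsupp.tsub_apply, h0]
      simp
    exact hspread j (hsub j hj) k (hsub k hk)
  · -- attach
    have hsub : ∀ i, i ∈ Z'.support → i ∈ Z.support ∨ i = k₀ := by
      intro i hi
      by_cases h : i = k₀
      · exact Or.inr h
      · left
        rw [Finsupp.mem_support_iff] at hi ⊢
        intro h0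
        apply hi
        have hne : ¬ (k₀ = i) := fun he => h he.symm
        rw [hZ', Finsupp.add_apply, h0]
        simp [Finsupp.single_apply, hne]
    have hex : ∃ p ∈ Z.support, l₀ < x₀ + p * ds - c := by
      by_contra hc
      push_neg at hc
      have hsum : (Z.sum fun k n => (n : ℝ) * chi K l₀ (x₀ + k * ds - c)) ≤ 0 := by
        rw [Finsupp.sum]
        exact Finset.sum_nonpos fun i hi =>
          mul_nonpos_of_nonneg_of_nonpos (Nat.cast_nonneg _) (chi_nonpos hK hl (hc i hi))
      rw [← heq] at hsum
      linarith
    have claimL : ∀ i ∈ Z.support, l₀ - S ≤ x₀ + i * ds - c := by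
      intro i hi
      obtain ⟨p, hp, hlp⟩ := hex
      have h1 := hsp p hp i hi
      have h2 : ((p : ℝ) - i) * ds = (x₀ + p * ds - c) - (x₀ + i * ds - c) := by ring
      linarith
    have claimU : ∀ i ∈ Z.support, x₀ + i * ds - c ≤ S - l₀ := by
      intro i hi
      by_cases hcase : ∃ p ∈ Z.support, x₀ + p * ds - c ≤ -l₀
      · obtain ⟨p, hp, hple⟩ := hcase
        have h1 := hsp i hi p hp
        have h2 : ((i : ℝ) - p) * ds = (x₀ + i * ds - c) - (x₀ + p * ds - c) := by ring
        linarith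
      · push_neg at hcase
        have hiZ : (1 : ℝ) ≤ (Z i : ℝ) := by
          exact_mod_cast Nat.one_le_iff_ne_zero.mpr (Finsupp.mem_support_iff.mp hi)
        have hnn : ∀ p ∈ Z.support, 0 ≤ (Z p : ℝ) * chi K l₀ (x₀ + p * ds - c) :=
          fun p hp => mul_nonneg (Nat.cast_nonneg _) (chi_nonneg hK hl (hcase p hp).le)
        have h0 : 0 ≤ chi K l₀ (x₀ + i * ds - c) := chi_nonneg hK hl (hcase i hi).le
        have hchiF : chi K l₀ (x₀ + i * ds - c) ≤ F := by
          rw [heq, Finsupp.sum]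
          calc chi K l₀ (x₀ + i * ds - c)
              ≤ (Z i : ℝ) * chi K l₀ (x₀ + i * ds - c) := by nlinarith
            _ ≤ ∑ p ∈ Z.support, (Z p : ℝ) * chi K l₀ (x₀ + p * ds - c) :=
              Finset.single_le_sum hnn hi
        have hlow := chi_lower hK hl (x₀ + i * ds - c)
        have hdiv : K * (F / K) = F := by field_simp
        have h2 : K * ((x₀ + i * ds - c) - l₀) ≤ K * (F / K) := by
          rw [hdiv]; linarith
        have h3 := le_of_mul_le_mul_left h2 hK
        linarith
    have key : ∀ i ∈ Z.support, ds * |(k₀ : ℝ) - (i : ℝ)| ≤ S := by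
      intro i hi
      have hU := claimU i hi
      have hL := claimL i hi
      have habs := abs_le.mp hk₀
      have heqd : ds * |(k₀ : ℝ) - i| = |((k₀ : ℝ) - i) * ds| := by
        rw [abs_mul, abs_of_pos hd]; ring
      rw [heqd]
      rw [abs_le]
      constructor
      · nlinarith [habs.1, hU]
      · nlinarith [habs.2, hL]
    rcases hsub j hj with hj' | rfl <;> rcases hsub k hk with hk' | rfl
    · exact hspread j hj' k hk'
    · rw [abs_sub_comm]; exact key j hj'
    · exact key k hk'
    · simpa using hS0.le
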